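/- In the extended model, for every fixed l ≥ 0, the mean of (α^{[l]}_k) over one period is sandwiched as follows: (B' + N' − n)/2 + K + l·N' − a·b/2 ≤ (1/(aBN))·Σ_{k=1}^{aBN} α^{[l]}_k ≤ (B' + N' − n)/2 + K + l·N' + a·b/2. -/

import Mathlib

/-- The `l`-failure Age-of-Information sequence of the extended model. -/
def aoiExt (A' B' N' ΔB ΔN : ℤ) (l k : ℕ) : ℤ :=
  2 + (l : ℤ) * N' + ((k : ℤ) * A' - ΔN - 1) % N' +
    (((k : ℤ) * A' - ΔB - 2 - (l : ℤ) * N') % B' -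
      ((k : ℤ) * A' - ΔN - 1) % N') % B'

/-- The constant `K = 2 + (Δ_N + 1) %̄ n` where `x %̄ m = ⌈x/m⌉·m − x`. -/
def extK (ΔN n : ℕ) : ℤ :=
  2 + (⌈(((ΔN : ℚ) + 1)) / (n : ℚ)⌉ * n - ((ΔN : ℤ) + 1))

/-!
Write `α_k = 2 + l N' + X_k + W_k % B'` with `X_k = (k A' - Δ_N - 1) % N'` and
`W_k = k A' - Δ_B - 2 - l N' - X_k`, and split `k = 1 + i + N a j` with `i < N a`, `j < B`.
Since `N a · A' = A b · N'`, `X_k` depends only on `i`. Since `N a · A' = a b · (A N n)` with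
`A N n` coprime to `B`, as `j` varies `W_k % B'` runs through all residues modulo `B' = a b · B`
in the class of `W_{1+i}` modulo `a b`. Likewise the `X_{1+i}` run through one class modulo `n` of
the residues modulo `N' = n · N a`, which produces `K` and `(N' - n) / 2`. All that is left
uncomputed is `∑ i, W_{1+i} % (a b) ∈ [0, N a (a b - 1)]`, whence the slack `± a b / 2`.
-/

open Finset

theorem Int.emod_mul_of_nonneg {m : ℤ} (hm : 0 ≤ m) (M w : ℤ) :
    w % (m * M) = w % m + m * (w / m % M) := by
  rw [Int.emod_def w (m * M), ← Int.ediv_ediv_of_nonneg hm, Int.emod_def w m,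
    Int.emod_def (w / m) M]
  ring

theorem sum_range_emod_add_mul_of_isCoprime {B : ℕ} {s : ℤ} (hs : IsCoprime s B) (μ : ℤ) :
    ∑ j ∈ range B, (μ + j * s) % B = ∑ j ∈ range B, (j : ℤ) := by
  rcases B.eq_zero_or_pos with rfl | hB
  · simp
  have hB' : (B : ℤ) ≠ 0 := by positivity
  set f : ℕ → ℕ := fun j => ((μ + j * s) % B).toNat
  have hf (j : ℕ) : (f j : ℤ) = (μ + j * s) % B := Int.toNat_of_nonneg (Int.emod_nonneg _ hB')
  have hmaps : ∀ j ∈ range B, f j ∈ range B := fun j _ => by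
    have := Int.emod_lt_of_pos (μ + j * s) (by positivity : (0 : ℤ) < B)
    have := hf j
    rw [mem_range]; omega
  have hinj : Set.InjOn f (range B) := by
    intro j hj j' hj' hjj'
    have hmod : μ + j * s ≡ μ + j' * s [ZMOD B] := by
      simpa only [Int.ModEq, ← hf] using congrArg ((↑) : ℕ → ℤ) hjj'
    have hdvd : (B : ℤ) ∣ (j' - j) * s := by
      simpa only [sub_mul] using (Int.ModEq.add_left_cancel' μ hmod).dvd
    exact Nat.ModEq.eq_of_lt_of_lt
      (Int.natCast_modEq_iff.mp (Int.modEq_iff_dvd.mpr (hs.symm.dvd_of_dvd_mul_right hdvd)))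
      (mem_range.mp hj) (mem_range.mp hj')
  have himage : (range B).image f = range B :=
    eq_of_subset_of_card_le (image_subset_iff.mpr hmaps) (card_image_of_injOn hinj).ge
  calc ∑ j ∈ range B, (μ + j * s) % B
      = ∑ j ∈ range B, (f j : ℤ) := sum_congr rfl fun j _ => (hf j).symm
    _ = ∑ t ∈ (range B).image f, (t : ℤ) := (sum_image hinj).symm
    _ = ∑ j ∈ range B, (j : ℤ) := by rw [himage]

theorem sum_range_emod_mul_add_mul {m : ℤ} (hm : 0 < m) {B : ℕ} {s : ℤ} (hs : IsCoprime s B)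
    (y : ℤ) :
    ∑ j ∈ range B, (y + j * (m * s)) % (m * B) =
      B * (y % m) + m * ∑ j ∈ range B, (j : ℤ) := by
  have hterm (j : ℕ) : (y + j * (m * s)) % (m * B) = y % m + m * ((y / m + j * s) % B) := by
    rw [Int.emod_mul_of_nonneg hm.le, show y + j * (m * s) = y + j * s * m by ring,
      Int.add_mul_emod_self_right, Int.add_mul_ediv_right _ _ hm.ne']
  simp only [hterm, sum_add_distrib, sum_const, card_range, nsmul_eq_mul, ← mul_sum,
    sum_range_emod_add_mul_of_isCoprime hs]

theorem sum_range_mul_eq_sum_sum {β : Type*} [AddCommMonoid β] (g : ℕ → β) (M B : ℕ) :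
    ∑ k ∈ range (M * B), g k = ∑ i ∈ range M, ∑ j ∈ range B, g (i + M * j) := by
  rw [sum_comm]
  induction B with
  | zero => simp
  | succ B ih =>
    rw [mul_add_one, sum_range_add, ih, sum_range_succ]
    simp only [add_comm]

theorem sum_Icc_one_mul_eq_sum_sum {β : Type*} [AddCommMonoid β] (g : ℕ → β) (M B : ℕ) :
    ∑ k ∈ Icc 1 (M * B), g k = ∑ i ∈ range M, ∑ j ∈ range B, g (1 + i + M * j) := by
  rw [← Ico_add_one_right_eq_Icc, sum_Ico_eq_sum_range, Nat.add_sub_cancel,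
    sum_range_mul_eq_sum_sum]
  simp only [add_assoc]

theorem two_mul_sum_range_natCast (m : ℕ) : 2 * ∑ i ∈ range m, (i : ℤ) = m * (m - 1) := by
  induction m with
  | zero => simp
  | succ m ih => rw [sum_range_succ, mul_add, ih]; push_cast; ring

theorem Nat.coprime_of_gcd_mul_right_eq_self {x y d : ℕ} (hd : 0 < d)
    (h : Nat.gcd (x * d) (y * d) = d) : Nat.Coprime x y := by
  rw [Nat.gcd_mul_right] at h
  exact Nat.eq_of_mul_eq_mul_right hd (h.trans (one_mul d).symm)

theorem extK_eq (ΔN n : ℕ) : extK ΔN n = 2 + (-ΔN - 1 : ℤ) % n := by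
  have hceil : ⌈((ΔN : ℚ) + 1) / n⌉ = -((-ΔN - 1 : ℤ) / n) := by
    rw [← Rat.floor_intCast_div_natCast, ← neg_neg ⌈_⌉, ← Int.floor_neg]
    push_cast; ring_nf
  rw [extK, hceil, Int.emod_def]
  ring

section

variable {A B N a b n : ℕ} {ΔB ΔN : ℤ} {l : ℕ}

theorem aoiExt_add_mul (k j : ℕ) :
    aoiExt (A * b * n) (B * a * b) (N * a * n) ΔB ΔN l (k + N * a * j) =
      2 + l * (N * a * n) + (k * (A * b * n) - ΔN - 1) % (N * a * n) +
        (k * (A * b * n) - ΔB - 2 - l * (N * a * n) - (k * (A * b * n) - ΔN - 1) % (N * a * n) +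
          j * (a * b * (A * N * n))) % (a * b * B) := by
  have hX : (((k + N * a * j : ℕ) : ℤ) * (A * b * n) - ΔN - 1) % (N * a * n) =
      (k * (A * b * n) - ΔN - 1) % (N * a * n) := by
    rw [← Int.add_mul_emod_self_left (k * (A * b * n) - ΔN - 1) _ (j * (A * b))]
    push_cast; ring_nf
  rw [aoiExt, Int.emod_sub_emod, hX]
  push_cast; ring_nf

theorem sum_range_aoiExt_add_mul (hs : IsCoprime ((A : ℤ) * N * n) B) (hab : 0 < (a : ℤ) * b)
    (k : ℕ) :
    ∑ j ∈ range B, aoiExt (A * b * n) (B * a * b) (N * a * n) ΔB ΔN l (k + N * a * j) =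
      B * (2 + l * (N * a * n) + (k * (A * b * n) - ΔN - 1) % (N * a * n)) +
        B * ((k * (A * b * n) - ΔB - 2 - l * (N * a * n) -
          (k * (A * b * n) - ΔN - 1) % (N * a * n)) % (a * b)) +
        a * b * ∑ j ∈ range B, (j : ℤ) := by
  simp only [aoiExt_add_mul, sum_add_distrib, sum_const, card_range, nsmul_eq_mul,
    sum_range_emod_mul_add_mul hab hs]
  ring

theorem sum_range_one_add_mul_sub_emod (hs : IsCoprime ((A : ℤ) * b) ((N : ℤ) * a))
    (hn : 0 < n) :
    ∑ i ∈ range (N * a), (((1 + i : ℕ) : ℤ) * (A * b * n) - ΔN - 1) % (N * a * n) =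
      N * a * ((-ΔN - 1) % n) + n * ∑ i ∈ range (N * a), (i : ℤ) := by
  have hterm (i : ℕ) : (((1 + i : ℕ) : ℤ) * (A * b * n) - ΔN - 1) % (N * a * n) =
      (-ΔN - 1 + n * (A * b) + i * (n * (A * b))) % (n * ((N * a : ℕ) : ℤ)) := by
    push_cast; ring_nf
  simp only [hterm]
  rw [sum_range_emod_mul_add_mul (by positivity) (by exact_mod_cast hs),
    Int.add_mul_emod_self_left]
  push_cast; ring

end

theorem exists_two_mul_sum_aoiExt {A B N a b n : ℕ} (hs₁ : IsCoprime ((A : ℤ) * N * n) B)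
    (hs₂ : IsCoprime ((A : ℤ) * b) ((N : ℤ) * a)) (hab : 0 < (a : ℤ) * b) (hn : 0 < n)
    (ΔB ΔN l : ℕ) :
    ∃ T : ℤ, 0 ≤ T ∧ T ≤ N * a * (a * b - 1) ∧
      2 * ∑ k ∈ Icc 1 (a * B * N), aoiExt (A * b * n) (B * a * b) (N * a * n) ΔB ΔN l k =
        a * B * N * (B * a * b + N * a * n - n + 2 * extK ΔN n + 2 * l * (N * a * n) - a * b) +
          2 * B * T := by
  refine ⟨∑ i ∈ range (N * a), (((1 + i : ℕ) : ℤ) * (A * b * n) - ΔB - 2 -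
      l * (N * a * n) - (((1 + i : ℕ) : ℤ) * (A * b * n) - ΔN - 1) % (N * a * n)) % (a * b),
    ?_, ?_, ?_⟩
  · exact sum_nonneg fun i _ => Int.emod_nonneg _ hab.ne'
  · calc _ ≤ ∑ i ∈ range (N * a), ((a : ℤ) * b - 1) :=
          sum_le_sum fun i _ => Int.le_sub_one_of_lt (Int.emod_lt_of_pos _ hab)
      _ = N * a * (a * b - 1) := by
          simp only [sum_const, card_range, nsmul_eq_mul]; push_cast; ring
  · rw [show a * B * N = N * a * B by ring, sum_Icc_one_mul_eq_sum_sum]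
    simp only [sum_range_aoiExt_add_mul hs₁ hab, sum_add_distrib, ← mul_sum, sum_const,
      card_range, nsmul_eq_mul, sum_range_one_add_mul_sub_emod hs₂ hn, extK_eq]
    push_cast
    have hgauss := two_mul_sum_range_natCast (N * a)
    push_cast at hgauss
    linear_combination (B * n : ℤ) * hgauss +
      (N * a * (a * b) : ℤ) * two_mul_sum_range_natCast B

theorem isCoprime_mul_mul_of_eq_gcd {A B N a b n : ℕ} (hapos : 0 < a) (hbpos : 0 < b)
    (ha : a = Nat.gcd (B * a * b) (N * a * n)) (hb : b = Nat.gcd (A * b * n) (B * a * b)) :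
    IsCoprime ((A : ℤ) * N * n) B := by
  have hAn : Nat.Coprime (A * n) (B * a) :=
    Nat.coprime_of_gcd_mul_right_eq_self hbpos (by rw [mul_right_comm A n b]; exact hb.symm)
  have hBb : Nat.Coprime (B * b) (N * n) := Nat.coprime_of_gcd_mul_right_eq_self hapos
    (by rw [mul_right_comm B b a, mul_right_comm N n a]; exact ha.symm)
  have hAnB := hAn.coprime_mul_right_right
  have hNB := hBb.coprime_mul_right.coprime_mul_right_right.symm
  exact_mod_cast Nat.isCoprime_iff_coprime.mpr
    ((hAnB.coprime_mul_right.mul_left hNB).mul_left hAnB.coprime_mul_left)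

theorem stmt13_general (A B N a b n : ℕ) (hB : 0 < B) (hN : 0 < N)
    (hapos : 0 < a) (hbpos : 0 < b) (hnpos : 0 < n)
    (ha : a = Nat.gcd (B * a * b) (N * a * n))
    (hb : b = Nat.gcd (A * b * n) (B * a * b))
    (hn : n = Nat.gcd (A * b * n) (N * a * n))
    (ΔB ΔN : ℕ) (l : ℕ) :
    ((B : ℚ) * a * b + (N : ℚ) * a * n - n) / 2 + (extK ΔN n : ℚ) +
          (l : ℚ) * ((N : ℚ) * a * n) - (a : ℚ) * b / 2 ≤
        (1 / ((a : ℚ) * B * N)) *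
          ∑ k ∈ Finset.Icc 1 (a * B * N),
            ((aoiExt (A * b * n : ℤ) (B * a * b : ℤ) (N * a * n : ℤ)
                (ΔB : ℤ) (ΔN : ℤ) l k : ℤ) : ℚ) ∧
      (1 / ((a : ℚ) * B * N)) *
          ∑ k ∈ Finset.Icc 1 (a * B * N),
            ((aoiExt (A * b * n : ℤ) (B * a * b : ℤ) (N * a * n : ℤ)
                (ΔB : ℤ) (ΔN : ℤ) l k : ℤ) : ℚ) ≤
        ((B : ℚ) * a * b + (N : ℚ) * a * n - n) / 2 + (extK ΔN n : ℚ) +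
          (l : ℚ) * ((N : ℚ) * a * n) + (a : ℚ) * b / 2 := by
  have hAbNa : IsCoprime ((A : ℤ) * b) ((N : ℤ) * a) := by
    exact_mod_cast Nat.isCoprime_iff_coprime.mpr
      (Nat.coprime_of_gcd_mul_right_eq_self hnpos hn.symm)
  obtain ⟨T, hT₀, hT₁, hsum⟩ := exists_two_mul_sum_aoiExt
    (isCoprime_mul_mul_of_eq_gcd hapos hbpos ha hb) hAbNa (by positivity) hnpos ΔB ΔN l
  have hsumℚ := congrArg (Int.cast : ℤ → ℚ) hsum
  push_cast at hsumℚ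
  have hT₀ℚ : (0 : ℚ) ≤ B * T := mul_nonneg (Nat.cast_nonneg B) (by exact_mod_cast hT₀)
  have hT₁ℚ : (B : ℚ) * T ≤ B * (N * a * (a * b - 1)) :=
    mul_le_mul_of_nonneg_left (by exact_mod_cast hT₁) (Nat.cast_nonneg B)
  have hP : (0 : ℚ) < a * B * N := by positivity
  rw [one_div_mul_eq_div, le_div_iff₀ hP, div_le_iff₀ hP]
  constructor <;> linarith

/-- Corollary 2 (key step): in the extended model, for every fixed `l`, the
mean of `α^{[l]}` over one period is sandwiched within `±a·b/2` around
`(B' + N' − n)/2 + K + l·N'`. -/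
theorem stmt13 (A B N a b n : ℕ) (hA : 0 < A) (hB : 0 < B) (hN : 0 < N)
    (hapos : 0 < a) (hbpos : 0 < b) (hnpos : 0 < n)
    (ha : a = Nat.gcd (B * a * b) (N * a * n))
    (hb : b = Nat.gcd (A * b * n) (B * a * b))
    (hn : n = Nat.gcd (A * b * n) (N * a * n))
    (ΔB ΔN : ℕ) (l : ℕ) :
    ((B : ℚ) * a * b + (N : ℚ) * a * n - n) / 2 + (extK ΔN n : ℚ) +
          (l : ℚ) * ((N : ℚ) * a * n) - (a : ℚ) * b / 2 ≤
        (1 / ((a : ℚ) * B * N)) *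
          ∑ k ∈ Finset.Icc 1 (a * B * N),
            ((aoiExt (A * b * n : ℤ) (B * a * b : ℤ) (N * a * n : ℤ)
                (ΔB : ℤ) (ΔN : ℤ) l k : ℤ) : ℚ) ∧
      (1 / ((a : ℚ) * B * N)) *
          ∑ k ∈ Finset.Icc 1 (a * B * N),
            ((aoiExt (A * b * n : ℤ) (B * a * b : ℤ) (N * a * n : ℤ)
                (ΔB : ℤ) (ΔN : ℤ) l k : ℤ) : ℚ) ≤
        ((B : ℚ) * a * b + (N : ℚ) * a * n - n) / 2 + (extK ΔN n : ℚ) +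
          (l : ℚ) * ((N : ℚ) * a * n) + (a : ℚ) * b / 2 :=
  stmt13_general A B N a b n hB hN hapos hbpos hnpos ha hb hn ΔB ΔN l
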